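/- arXiv:1504.06989 — 4 statements merged into one kernel-verified Lean document; each statement's English description precedes it below -/
import Mathlib

section
/- Let A ⊂ ℝ be a finite set with |A| ≥ 2 that is of SzT-type with parameter α = 2 and coefficient d > 0. Then there is an absolute constant C > 0 (independent of A and d) such that E₃(A) = Σ_{s ∈ ℝ} |A ∩ (A − s)|³ ≤ C · d · |A|³ · log |A|. -/
open scoped Pointwise Classical

/-- `delta X Y s` is the number of representations of `s` as `x - y`, `x ∈ X`, `y ∈ Y`. -/
noncomputable def delta (X Y : Finset ℝ) (s : ℝ) : ℕ :=
  ((X ×ˢ Y).filter fun p => p.1 - p.2 = s).card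

/-- `X` is of Szemerédi–Trotter type with parameter `α = 2` and coefficient `d`. -/
def SzTType2 (X : Finset ℝ) (d : ℝ) : Prop :=
  ∀ (Y : Finset ℝ) (τ : ℝ), 1 ≤ τ →
    (((X - Y).filter fun s => τ ≤ (delta X Y s : ℝ)).card : ℝ)
      ≤ d * X.card * (Y.card : ℝ) ^ 2 / τ ^ 3

lemma delta_eq (A : Finset ℝ) (s : ℝ) :
    (A.filter fun z => z + s ∈ A).card = delta A A s := by
  unfold delta
  apply Finset.card_bij (fun z _ => (z + s, z))
  · intro z hz
    simp only [Finset.mem_filter, Finset.mem_product] at hz ⊢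
    exact ⟨⟨hz.2, hz.1⟩, by ring⟩
  · intro a ha b hb h
    simpa using congrArg Prod.snd h
  · intro p hp
    simp only [Finset.mem_filter, Finset.mem_product] at hp
    exact ⟨p.2, by simp only [Finset.mem_filter]; exact ⟨hp.1.2, by rw [← hp.2]; simpa using hp.1.1⟩,
      by rw [← hp.2]; simp⟩

lemma cube_le_sum (m : ℕ) : m ^ 3 ≤ ∑ k ∈ Finset.Icc 1 m, 3 * k ^ 2 := by
  induction m with
  | zero => simp
  | succ m ih =>
    rw [Finset.sum_Icc_succ_top (Nat.succ_le_succ (Nat.zero_le m))]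
    have h : Finset.Icc (Nat.succ 0) m = Finset.Icc 1 m := rfl
    rw [h]
    have h2 : (m + 1) ^ 3 = m ^ 3 + 3 * m ^ 2 + 3 * m + 1 := by ring
    have h3 : 3 * (m + 1) ^ 2 = 3 * m ^ 2 + 6 * m + 3 := by ring
    linarith [ih]

/-- The third-order energy `E₃(A) = Σ_s |A ∩ (A - s)|³`, the sum restricted to
`s ∈ A - A`, which carries all the nonzero terms. -/
noncomputable def E3 (A : Finset ℝ) : ℕ :=
  ∑ s ∈ A - A, (A.filter fun z => z + s ∈ A).card ^ 3

theorem E3_of_SzT_type :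
    ∃ C : ℝ, 0 < C ∧ ∀ (A : Finset ℝ) (d : ℝ), 2 ≤ A.card → 0 < d → SzTType2 A d →
      (E3 A : ℝ) ≤ C * d * (A.card : ℝ) ^ 3 * Real.log A.card := by
  refine ⟨8, by norm_num, ?_⟩
  intro A d hA hd hSzT
  set n := A.card with hn
  set δ : ℝ → ℕ := fun s => (A.filter fun z => z + s ∈ A).card with hδ
  set N : ℕ → ℕ := fun k => ((A - A).filter fun s => k ≤ δ s).card with hN
  -- Step 1 (in ℕ): layer cake
  have key : ∀ s : ℝ, δ s ^ 3 ≤ ∑ k ∈ Finset.Icc 1 n, if k ≤ δ s then 3 * k ^ 2 else 0 := by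
    intro s
    have hle : δ s ≤ n := Finset.card_filter_le _ _
    have hfe : (Finset.Icc 1 n).filter (fun k => k ≤ δ s) = Finset.Icc 1 (δ s) := by
      ext k
      simp only [Finset.mem_filter, Finset.mem_Icc]
      omega
    calc δ s ^ 3 ≤ ∑ k ∈ Finset.Icc 1 (δ s), 3 * k ^ 2 := cube_le_sum _
      _ = ∑ k ∈ Finset.Icc 1 n, if k ≤ δ s then 3 * k ^ 2 else 0 := by
          rw [← hfe, Finset.sum_filter]
  have step1 : E3 A ≤ ∑ k ∈ Finset.Icc 1 n, 3 * k ^ 2 * N k := by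
    calc E3 A ≤ ∑ s ∈ A - A, ∑ k ∈ Finset.Icc 1 n, if k ≤ δ s then 3 * k ^ 2 else 0 :=
          Finset.sum_le_sum fun s _ => key s
      _ = ∑ k ∈ Finset.Icc 1 n, ∑ s ∈ A - A, if k ≤ δ s then 3 * k ^ 2 else 0 :=
          Finset.sum_comm
      _ = ∑ k ∈ Finset.Icc 1 n, 3 * k ^ 2 * N k := by
          refine Finset.sum_congr rfl fun k _ => ?_
          rw [← Finset.sum_filter, Finset.sum_const, smul_eq_mul, mul_comm]
  -- Step 2: bound N k via SzT
  have hNk : ∀ k ∈ Finset.Icc 1 n, (N k : ℝ) ≤ d * n * (n : ℝ) ^ 2 / (k : ℝ) ^ 3 := by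
    intro k hk
    have hk1 : 1 ≤ k := (Finset.mem_Icc.mp hk).1
    have hfilt : ((A - A).filter fun s => k ≤ δ s)
        = ((A - A).filter fun s => (k : ℝ) ≤ (delta A A s : ℝ)) := by
      apply Finset.filter_congr
      intro s _
      rw [hδ]
      simp only [delta_eq A s, Nat.cast_le]
    have := hSzT A (k : ℝ) (by exact_mod_cast hk1)
    rw [hN]
    simp only [hfilt]
    exact this
  -- assemble in ℝ
  have hharm : ∑ k ∈ Finset.Icc 1 n, ((k : ℝ))⁻¹ = ((harmonic n : ℚ) : ℝ) := by
    rw [harmonic_eq_sum_Icc]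
    push_cast
    rfl
  have hcast : (E3 A : ℝ) ≤ ∑ k ∈ Finset.Icc 1 n, 3 * (k : ℝ) ^ 2 * (N k : ℝ) := by
    have := step1
    exact_mod_cast this
  have step2 : (E3 A : ℝ) ≤ 3 * d * (n : ℝ) ^ 3 * ((harmonic n : ℚ) : ℝ) := by
    calc (E3 A : ℝ) ≤ ∑ k ∈ Finset.Icc 1 n, 3 * (k : ℝ) ^ 2 * (N k : ℝ) := hcast
      _ ≤ ∑ k ∈ Finset.Icc 1 n, 3 * (k : ℝ) ^ 2 * (d * n * (n : ℝ) ^ 2 / (k : ℝ) ^ 3) := by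
          refine Finset.sum_le_sum fun k hk => ?_
          exact mul_le_mul_of_nonneg_left (hNk k hk) (by positivity)
      _ = ∑ k ∈ Finset.Icc 1 n, 3 * d * (n : ℝ) ^ 3 * ((k : ℝ))⁻¹ := by
          refine Finset.sum_congr rfl fun k hk => ?_
          have hk1 : 1 ≤ k := (Finset.mem_Icc.mp hk).1
          have hk0 : (k : ℝ) ≠ 0 := Nat.cast_ne_zero.mpr (by omega)
          field_simp
      _ = 3 * d * (n : ℝ) ^ 3 * ((harmonic n : ℚ) : ℝ) := by
          rw [← Finset.mul_sum, hharm]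
  have hn0 : 0 < n := by omega
  have hn3 : (0 : ℝ) < (n : ℝ) ^ 3 := by positivity
  have hfac : (0 : ℝ) < d * (n : ℝ) ^ 3 := mul_pos hd hn3
  have hH := harmonic_le_one_add_log n
  set L := Real.log (n : ℝ) with hL
  have hL2 : Real.log 2 ≤ L := by
    apply Real.log_le_log (by norm_num)
    exact_mod_cast hA
  have h069 : (0.6931 : ℝ) < Real.log 2 := by
    have := Real.log_two_gt_d9
    linarith
  have h38 : 3 * (1 + L) ≤ 8 * L := by linarith
  calc (E3 A : ℝ) ≤ 3 * d * (n : ℝ) ^ 3 * ((harmonic n : ℚ) : ℝ) := step2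
    _ ≤ 3 * d * (n : ℝ) ^ 3 * (1 + L) := by
        apply mul_le_mul_of_nonneg_left hH
        nlinarith [hfac]
    _ = d * (n : ℝ) ^ 3 * (3 * (1 + L)) := by ring
    _ ≤ d * (n : ℝ) ^ 3 * (8 * L) := mul_le_mul_of_nonneg_left h38 hfac.le
    _ = 8 * d * (n : ℝ) ^ 3 * L := by ring
end

section
/- Let A ⊂ ℝ be a finite set that is of SzT-type with parameter α = 2 and coefficient d > 0, let m ≥ 3 be an integer, and let τ ≥ 1 be real. Then the number of m-tuples (a₁,…,a_m) ∈ A^m with |(A − a₁) ∩ (A − a₂) ∩ ⋯ ∩ (A − a_m)| ≥ τ is at most d · |A| · E_{m−1,3}(A) / τ³. -/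
open scoped Pointwise Classical

/-- `A_{x⃗} = A ∩ (A - x₁) ∩ ⋯ ∩ (A - x_m)`, realized as the set of `z ∈ A`
with `z + xᵢ ∈ A` for all `i`. -/
noncomputable def interFiber (A : Finset ℝ) {m : ℕ} (x : Fin m → ℝ) : Finset ℝ :=
  A.filter fun z => ∀ i, z + x i ∈ A

/-- The energy `E_{k,l}(A) = Σ_{x⃗ ∈ ℝ^{k-1}} |A_{x⃗}|ˡ`; the sum is restricted to
`(A - A)^{k-1}`, which carries all the nonzero terms. -/
noncomputable def Ekl (A : Finset ℝ) (k l : ℕ) : ℕ :=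
  ∑ x ∈ Fintype.piFinset (fun _ : Fin (k - 1) => A - A), (interFiber A x).card ^ l
/-!
Fix the differences `x = (a₂ - a₁, …, a_{m-1} - a₁)` of a rich tuple. Then `a₁` lies in
`Y = A_x`, and translating by `a₁` embeds `⋂ (A - aᵢ)` into the representations of
`a_m - a₁` as a difference in `A - Y`, so `a_m - a₁` is a `τ`-rich difference of `(A, Y)`.
The tuple is determined by `(x, a_m - a₁, a₁)`, so by the SzT bound the fibre over `x` has at
most `d |A| |Y|² / τ³ · |Y|` elements; summing `|A_x|³` over `x ∈ (A - A)^{m-2}` gives `E_{m-1,3}(A)`.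
-/

open Finset

noncomputable def richDiffs (X Y : Finset ℝ) (τ : ℝ) : Finset ℝ :=
  (X - Y).filter fun s => τ ≤ (delta X Y s : ℝ)

noncomputable def commonShifts (A : Finset ℝ) {n : ℕ} (a : Fin (n + 1) → ℝ) : Finset ℝ :=
  (A.image fun t => t - a 0).filter fun z => ∀ i, z + a i ∈ A

def innerDiffs {n : ℕ} (a : Fin (n + 2) → ℝ) : Fin n → ℝ :=
  fun j => a j.castSucc.succ - a 0

theorem delta_eq_card_filter (X Y : Finset ℝ) (s : ℝ) :
    delta X Y s = #(Y.filter fun y => y + s ∈ X) := by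
  refine card_nbij' Prod.snd (fun y => (y + s, y)) ?_ ?_ ?_ ?_
  · rintro ⟨x, y⟩ h
    simp only [coe_filter, mem_product, Set.mem_ofPred_eq] at h ⊢
    obtain ⟨⟨hx, hy⟩, rfl⟩ := h
    exact ⟨hy, by simpa using hx⟩
  · intro y h
    simp only [coe_filter, mem_product, Set.mem_ofPred_eq] at h ⊢
    exact ⟨⟨h.2, h.1⟩, by ring⟩
  · rintro ⟨x, y⟩ h
    simp only [coe_filter, mem_product, Set.mem_ofPred_eq] at h
    simp [← h.2]
  · exact fun _ _ => rfl

variable {A : Finset ℝ} {n : ℕ}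

theorem innerDiffs_mem_piFinset {a : Fin (n + 2) → ℝ} (ha : a ∈ Fintype.piFinset fun _ => A) :
    innerDiffs a ∈ Fintype.piFinset fun _ => A - A := by
  rw [Fintype.mem_piFinset] at ha ⊢
  exact fun j => sub_mem_sub (ha _) (ha 0)

theorem mem_interFiber_innerDiffs {a : Fin (n + 2) → ℝ} (ha : a ∈ Fintype.piFinset fun _ => A) :
    a 0 ∈ interFiber A (innerDiffs a) := by
  rw [Fintype.mem_piFinset] at ha
  refine mem_filter.2 ⟨ha 0, fun j => ?_⟩
  simpa [innerDiffs] using ha j.castSucc.succ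

theorem card_commonShifts_le_delta (a : Fin (n + 2) → ℝ) :
    #(commonShifts A a) ≤ delta A (interFiber A (innerDiffs a)) (a (Fin.last _) - a 0) := by
  rw [delta_eq_card_filter]
  refine card_le_card_of_injOn (· + a 0) (fun z hz => ?_) (add_left_injective _).injOn
  have hz' := (mem_filter.1 (mem_coe.1 hz)).2
  refine mem_coe.2 (mem_filter.2 ⟨mem_filter.2 ⟨hz' 0, fun j => ?_⟩, ?_⟩)
  · simpa [innerDiffs, add_assoc] using hz' j.castSucc.succ
  · simpa [add_assoc] using hz' (Fin.last _)

theorem injective_innerDiffs_prod :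
    Function.Injective fun a : Fin (n + 2) → ℝ => (innerDiffs a, a (Fin.last _) - a 0, a 0) := by
  intro a b hab
  simp only [Prod.mk.injEq] at hab
  obtain ⟨hdiff, hlast, h0⟩ := hab
  funext i
  refine Fin.cases h0 (fun i => ?_) i
  refine Fin.lastCases ?_ (fun j => ?_) i
  · simpa [h0] using hlast
  · simpa [innerDiffs, h0] using congrFun hdiff j

theorem card_rich_tuples_le_sum (τ : ℝ) :
    #((Fintype.piFinset fun _ : Fin (n + 2) => A).filter fun a => τ ≤ (#(commonShifts A a) : ℝ))
      ≤ ∑ x ∈ Fintype.piFinset (fun _ : Fin n => A - A),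
          #(richDiffs A (interFiber A x) τ) * #(interFiber A x) := by
  set T := (Fintype.piFinset fun _ : Fin (n + 2) => A).filter
    fun a => τ ≤ (#(commonShifts A a) : ℝ)
  calc #T = #(T.image fun a => (innerDiffs a, a (Fin.last _) - a 0, a 0)) :=
        (card_image_of_injective _ injective_innerDiffs_prod).symm
    _ ≤ #((Fintype.piFinset fun _ : Fin n => A - A).biUnion fun x =>
          {x} ×ˢ richDiffs A (interFiber A x) τ ×ˢ interFiber A x) := by
        refine card_le_card (image_subset_iff.2 fun a ha => ?_)
        obtain ⟨haA, hrich⟩ := mem_filter.1 ha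
        have hY := mem_interFiber_innerDiffs haA
        refine mem_biUnion.2 ⟨_, innerDiffs_mem_piFinset haA, mem_product.2 ⟨mem_singleton_self _,
          mem_product.2 ⟨mem_filter.2 ⟨sub_mem_sub (Fintype.mem_piFinset.1 haA _) hY, ?_⟩, hY⟩⟩⟩
        exact hrich.trans (Nat.cast_le.2 (card_commonShifts_le_delta a))
    _ ≤ _ := card_biUnion_le.trans (by simp [card_product])

theorem rich_tuples_of_SzT_type (A : Finset ℝ) (d : ℝ)
    (hA : SzTType2 A d) (m : ℕ) (hm : 3 ≤ m) (τ : ℝ) (hτ : 1 ≤ τ) :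
    ((((Fintype.piFinset fun _ : Fin m => A).filter fun a =>
        τ ≤ ((((A.image fun t => t - a ⟨0, by omega⟩).filter fun z =>
          ∀ i, z + a i ∈ A).card : ℝ))).card : ℝ))
      ≤ d * A.card * (Ekl A (m - 1) 3 : ℝ) / τ ^ 3 := by
  obtain ⟨n, rfl⟩ : ∃ n, m = n + 2 := ⟨m - 2, by omega⟩
  simp only [Fin.mk_zero]
  calc _ ≤ ((∑ x ∈ Fintype.piFinset (fun _ : Fin n => A - A),
          #(richDiffs A (interFiber A x) τ) * #(interFiber A x) : ℕ) : ℝ) :=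
        Nat.cast_le.2 (card_rich_tuples_le_sum τ)
    _ ≤ ∑ x ∈ Fintype.piFinset (fun _ : Fin n => A - A),
          d * #A * (#(interFiber A x) : ℝ) ^ 2 / τ ^ 3 * #(interFiber A x) := by
        push_cast
        exact sum_le_sum fun x _ => mul_le_mul_of_nonneg_right (hA _ τ hτ) (Nat.cast_nonneg _)
    _ = d * #A * (Ekl A (n + 2 - 1) 3 : ℝ) / τ ^ 3 := by
        simp only [Ekl, Nat.cast_sum, Nat.cast_pow, mul_sum, sum_div]
        exact sum_congr rfl fun x _ => by ring
end

section
/- Let A ⊂ ℝ be a finite set with |A| = n^{1/2} (n a perfect square) that is of SzT-type with parameter α = 2 and coefficient d > 0, and let k ≥ 1 be real. Then there is an absolute constant C > 0 such that the set {(a,b) ∈ A² : there exists c ∈ A with |(A − a) ∩ (A − b) ∩ (A − c)| ≥ k} — i.e., the image under the projection (a,b,c) ↦ (a,b) of the set of k-rich points of A³ — has cardinality at most C · d · n^{3/2} / k². -/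
open scoped Pointwise Classical

/-- The cardinality of `(A - a) ∩ (A - b) ∩ (A - c)`, realized as the set of
`z ∈ A - a` with `z + a, z + b, z + c ∈ A`. -/
noncomputable def tripleInterCard (A : Finset ℝ) (a b c : ℝ) : ℕ :=
  (((A.image fun u => u - a).filter fun z =>
    z + a ∈ A ∧ z + b ∈ A ∧ z + c ∈ A)).card

/-!
If `(a, b, c)` is `k`-rich then `a - b` has at least `k` representations as a difference in
`A - A`, so the projected set has at most `∑ δ(s)` elements, the sum over the popular
differences `s` with `δ(s) ≥ k`. Writing this sum in layer-cake form `∑ₜ #{s : δ(s) ≥ k, δ(s) > t}`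
and applying the Szemerédi–Trotter bound at level `τ = (k + t + 1) / 2` gives
`8 d |A|³ ∑ₜ (k + t + 1)⁻³`, and this series telescopes to at most `1 / (2 k²)`.
-/

open Finset

lemma sum_eq_sum_range_card_filter_lt {ι : Type*} (s : Finset ι) (f : ι → ℕ) {m : ℕ}
    (hf : ∀ i ∈ s, f i ≤ m) :
    ∑ i ∈ s, f i = ∑ t ∈ range m, #{i ∈ s | t < f i} := by
  simp only [card_filter]
  rw [sum_comm]
  refine sum_congr rfl fun i hi => ?_
  have hrange : {t ∈ range m | t < f i} = range (f i) := by
    ext t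
    simp only [mem_filter, mem_range]
    have := hf i hi
    omega
  rw [← card_filter, hrange, card_range]

lemma delta_le_card_left (X Y : Finset ℝ) (s : ℝ) : delta X Y s ≤ #X := by
  refine card_le_card_of_injOn Prod.fst (fun p hp => (mem_product.1 (mem_filter.1 hp).1).1) ?_
  intro p hp q hq h
  have hp' := (mem_filter.1 hp).2
  have hq' := (mem_filter.1 hq).2
  exact Prod.ext h (by linarith)

lemma tripleInterCard_le_delta (A : Finset ℝ) (a b c : ℝ) :
    tripleInterCard A a b c ≤ delta A A (a - b) := by
  refine card_le_card_of_injOn (fun z => (z + a, z + b)) ?_ ?_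
  · intro z hz
    obtain ⟨-, ha, hb, -⟩ := mem_filter.1 hz
    exact mem_filter.2 ⟨mem_product.2 ⟨ha, hb⟩, by ring⟩
  · intro z _ w _ h
    simpa using congrArg Prod.fst h

lemma card_filter_sub_eq_sum_delta (X Y : Finset ℝ) (P : ℝ → Prop) [DecidablePred P] :
    #{p ∈ X ×ˢ Y | P (p.1 - p.2)} = ∑ s ∈ X - Y with P s, delta X Y s := by
  rw [card_eq_sum_card_fiberwise (f := fun p => p.1 - p.2) (t := {s ∈ X - Y | P s})]
  · refine sum_congr rfl fun s hs => ?_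
    rw [filter_filter]
    congr 1
    refine filter_congr fun p _ => ⟨And.right, fun h => ⟨h ▸ (mem_filter.1 hs).2, h⟩⟩
  · intro p hp
    obtain ⟨hXY, hP⟩ := mem_filter.1 hp
    obtain ⟨hX, hY⟩ := mem_product.1 hXY
    exact mem_filter.2 ⟨sub_mem_sub hX hY, hP⟩

lemma inv_add_one_pow_three_le {z : ℝ} (hz : 0 < z) :
    1 / (z + 1) ^ 3 ≤ 1 / (2 * z ^ 2) - 1 / (2 * (z + 1) ^ 2) := by
  rw [div_sub_div _ _ (by positivity) (by positivity),
    div_le_div_iff₀ (by positivity) (by positivity)]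
  nlinarith [pow_pos hz 2, pow_pos hz 3, pow_pos hz 4, pow_pos hz 5]

lemma sum_range_inv_add_pow_three_le {y : ℝ} (hy : 0 < y) (m : ℕ) :
    ∑ t ∈ range m, 1 / (y + t + 1) ^ 3 ≤ 1 / (2 * y ^ 2) := by
  set g : ℕ → ℝ := fun t => 1 / (2 * (y + t) ^ 2)
  calc ∑ t ∈ range m, 1 / (y + t + 1) ^ 3
      ≤ ∑ t ∈ range m, (g t - g (t + 1)) := by
        refine sum_le_sum fun t _ => ?_
        simpa [g, add_assoc] using inv_add_one_pow_three_le (z := y + t) (by positivity)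
    _ = g 0 - g m := sum_range_sub' g m
    _ ≤ 1 / (2 * y ^ 2) := by
        simp only [g, CharP.cast_eq_zero, add_zero]
        linarith [show 0 ≤ g m by positivity]

namespace SzTType2

variable {X : Finset ℝ} {d : ℝ}

lemma card_filter_delta_gt_le (hX : SzTType2 X d) (Y : Finset ℝ) {k : ℝ} (hk : 1 ≤ k) (t : ℕ) :
    (#{s ∈ X - Y | k ≤ (delta X Y s : ℝ) ∧ t < delta X Y s} : ℝ)
      ≤ 8 * d * #X * #Y ^ 2 / (k + t + 1) ^ 3 := by
  set τ : ℝ := (k + t + 1) / 2 with hτ_def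
  have hτ : 1 ≤ τ := by have : (0 : ℝ) ≤ t := t.cast_nonneg; linarith
  have hsub : {s ∈ X - Y | k ≤ (delta X Y s : ℝ) ∧ t < delta X Y s}
      ⊆ {s ∈ X - Y | τ ≤ (delta X Y s : ℝ)} := by
    refine monotone_filter_right _ fun s _ ⟨hks, hts⟩ => ?_
    have : (t : ℝ) + 1 ≤ delta X Y s := by exact_mod_cast hts
    linarith
  calc (#{s ∈ X - Y | k ≤ (delta X Y s : ℝ) ∧ t < delta X Y s} : ℝ)
      ≤ #{s ∈ X - Y | τ ≤ (delta X Y s : ℝ)} := by exact_mod_cast card_le_card hsub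
    _ ≤ d * #X * #Y ^ 2 / τ ^ 3 := hX Y τ hτ
    _ = 8 * d * #X * #Y ^ 2 / (k + t + 1) ^ 3 := by rw [hτ_def, div_pow]; field_simp; ring

theorem sum_delta_filter_le (hX : SzTType2 X d) (hd : 0 ≤ d) (Y : Finset ℝ) {k : ℝ}
    (hk : 1 ≤ k) :
    (∑ s ∈ X - Y with k ≤ (delta X Y s : ℝ), delta X Y s : ℝ) ≤ 4 * d * #X * #Y ^ 2 / k ^ 2 := by
  calc (∑ s ∈ X - Y with k ≤ (delta X Y s : ℝ), delta X Y s : ℝ)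
      = ∑ t ∈ range #X, (#{s ∈ X - Y | k ≤ (delta X Y s : ℝ) ∧ t < delta X Y s} : ℝ) := by
        have := sum_eq_sum_range_card_filter_lt {s ∈ X - Y | k ≤ (delta X Y s : ℝ)} (delta X Y)
          fun s _ => delta_le_card_left X Y s
        simp only [filter_filter] at this
        exact_mod_cast this
    _ ≤ ∑ t ∈ range #X, 8 * d * #X * #Y ^ 2 * (1 / (k + t + 1) ^ 3) := by
        refine sum_le_sum fun t _ => ?_
        rw [mul_one_div]
        exact hX.card_filter_delta_gt_le Y hk t
    _ ≤ 8 * d * #X * #Y ^ 2 * (1 / (2 * k ^ 2)) := by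
        rw [← mul_sum]
        gcongr
        exact sum_range_inv_add_pow_three_le (by linarith) _
    _ = 4 * d * #X * #Y ^ 2 / k ^ 2 := by field_simp; ring

end SzTType2

theorem projection_of_rich_points :
    ∃ C : ℝ, 0 < C ∧ ∀ (n m : ℕ) (A : Finset ℝ) (d k : ℝ),
      n = m ^ 2 → A.card = m → 0 < d → SzTType2 A d → 1 ≤ k →
      (((A ×ˢ A).filter fun p =>
          ∃ c ∈ A, k ≤ (tripleInterCard A p.1 p.2 c : ℝ)).card : ℝ)
        ≤ C * d * (n : ℝ) ^ ((3 : ℝ) / 2) / k ^ 2 := by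
  refine ⟨4, by norm_num, fun n m A d k hn hm hd hA hk => ?_⟩
  have hrich : (A ×ˢ A).filter (fun p => ∃ c ∈ A, k ≤ (tripleInterCard A p.1 p.2 c : ℝ))
      ⊆ {p ∈ A ×ˢ A | k ≤ (delta A A (p.1 - p.2) : ℝ)} :=
    monotone_filter_right _ fun p _ ⟨c, _, hc⟩ =>
      hc.trans (by exact_mod_cast tripleInterCard_le_delta A p.1 p.2 c)
  have hn : (n : ℝ) ^ ((3 : ℝ) / 2) = (m : ℝ) ^ 3 := by
    rw [hn, Nat.cast_pow, ← Real.rpow_natCast, ← Real.rpow_mul m.cast_nonneg]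
    norm_num
  calc (((A ×ˢ A).filter fun p => ∃ c ∈ A, k ≤ (tripleInterCard A p.1 p.2 c : ℝ)).card : ℝ)
      ≤ #{p ∈ A ×ˢ A | k ≤ (delta A A (p.1 - p.2) : ℝ)} := by exact_mod_cast card_le_card hrich
    _ = ∑ s ∈ A - A with k ≤ (delta A A s : ℝ), (delta A A s : ℝ) := by
        exact_mod_cast card_filter_sub_eq_sum_delta A A fun s => k ≤ (delta A A s : ℝ)
    _ ≤ 4 * d * #A * #A ^ 2 / k ^ 2 := hA.sum_delta_filter_le hd.le A hk
    _ = 4 * d * (n : ℝ) ^ ((3 : ℝ) / 2) / k ^ 2 := by rw [hn, hm]; ring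
end

section
/- There is an absolute constant C > 0 with the following property. Let A ⊂ ℝ be a finite nonempty set of positive reals and let M ≥ 1 be such that |A·A| ≤ M|A|, where A·A = {a·a' : a, a' ∈ A}. Then A is of SzT-type with parameter α = 2 and coefficient C·M²; that is, for every finite set Y ⊂ ℝ and every real τ ≥ 1, |{s ∈ A − Y : δ_{A,Y}(s) ≥ τ}| ≤ C · M² · |A| · |Y|² / τ³. -/
/-!
Elekes' incidence argument. If `δ_{A,Y}(s) ≥ τ` and `a ∈ A`, the line `x = a (y + s)` contains at
least `τ` points of the grid `(A·A) × Y`, since `a • A ⊆ A·A`. These `|A| |S|` lines are increasing,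
hence chains for the product order, and two distinct points lie on at most one of them. Cut `A·A`
and `Y` into `r ≈ τ / 4` blocks of consecutive elements: a chain meets at most `2r` grid cells, and
every pair of points in a common cell lies on at most one line, which bounds the number `L` of
`τ`-rich lines by `L τ³ ≤ 512 |A·A|² |Y|²` once `τ ≥ 4`. Then `|A·A| ≤ M |A|` gives the claim;
for `τ < 4` the trivial bound `|A - Y| ≤ |A| |Y|` suffices.
-/

open scoped Pointwise Classical

open Finset

section RankBlock

variable {α : Type*} [LinearOrder α]

/-- The block of `z` when `Z`, in increasing order, is cut into runs of `#Z / r + 1` elements. -/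
def rankBlock (Z : Finset α) (r : ℕ) (z : α) : ℕ :=
  #{w ∈ Z | w < z} / (#Z / r + 1)

lemma strictMonoOn_card_filter_lt (Z : Finset α) :
    StrictMonoOn (fun z => #{w ∈ Z | w < z}) (Z : Set α) := by
  intro z hz z' _ hzz'
  refine card_lt_card ((ssubset_iff_of_subset ?_).2 ⟨z, ?_, ?_⟩)
  · exact monotone_filter_right _ fun _ _ hw => hw.trans hzz'
  · simpa using ⟨hz, hzz'⟩
  · simp

lemma rankBlock_mono (Z : Finset α) (r : ℕ) : Monotone (rankBlock Z r) :=
  fun _ _ h => Nat.div_le_div_right <| card_le_card <|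
    monotone_filter_right _ fun _ _ hw => hw.trans_le h

lemma rankBlock_lt (Z : Finset α) {r : ℕ} (hr : 0 < r) {z : α} (hz : z ∈ Z) :
    rankBlock Z r z < r := by
  have hrank : #{w ∈ Z | w < z} < #Z :=
    card_lt_card ((ssubset_iff_of_subset (filter_subset _ _)).2 ⟨z, hz, by simp⟩)
  rw [rankBlock, Nat.div_lt_iff_lt_mul (Nat.succ_pos _)]
  exact hrank.trans (Nat.lt_mul_div_succ _ hr)

lemma card_filter_rankBlock_eq_le (Z : Finset α) (r j : ℕ) :
    #{z ∈ Z | rankBlock Z r z = j} ≤ #Z / r + 1 := by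
  set u := #Z / r + 1
  calc #{z ∈ Z | rankBlock Z r z = j} ≤ #(Ico (j * u) (j * u + u)) := by
        refine card_le_card_of_injOn (fun z => #{w ∈ Z | w < z}) ?_ ?_
        · intro z hz
          obtain ⟨-, rfl⟩ := mem_filter.1 hz
          exact mem_Ico.2 ⟨Nat.div_mul_le_self _ _, Nat.lt_div_mul_add (Nat.succ_pos _)⟩
        · exact (strictMonoOn_card_filter_lt Z).injOn.mono (coe_subset.2 (filter_subset _ _))
    _ = u := by simp

end RankBlock

lemma card_le_add_of_isChain {C : Finset (ℕ × ℕ)} (hC : IsChain (· ≤ ·) (C : Set (ℕ × ℕ)))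
    {m n : ℕ} (hmn : ∀ c ∈ C, c.1 < m ∧ c.2 < n) : #C ≤ m + n := by
  calc #C ≤ #(range (m + n)) := by
        refine card_le_card_of_injOn (fun c => c.1 + c.2) (fun c hc => ?_) ?_
        · have := hmn c hc
          simp only [coe_range, Set.mem_Iio]
          omega
        · intro c hc c' hc' hsum
          rcases hC.total hc hc' with h | h <;>
          · rw [Prod.le_def] at h
            simp only at hsum
            exact Prod.ext (by omega) (by omega)
    _ = m + n := card_range _

section CellPartition

variable {γ κ ι : Type*} [DecidableEq κ]

lemma card_le_card_image_add_card_filter_offDiag (T : Finset γ) (c : γ → κ) :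
    #T ≤ #(T.image c) + #{w ∈ T.offDiag | c w.1 = c w.2} := by
  have hpairs : #{w ∈ T.offDiag | c w.1 = c w.2} =
      ∑ b ∈ T.image c, #{w ∈ {w ∈ T.offDiag | c w.1 = c w.2} | c w.1 = b} :=
    card_eq_sum_card_fiberwise fun w hw =>
      mem_image_of_mem c (mem_offDiag.1 (mem_filter.1 hw).1).1
  rw [card_eq_sum_card_image c T, hpairs, card_eq_sum_ones (T.image c), ← sum_add_distrib]
  refine sum_le_sum fun b _ => ?_
  set F := {t ∈ T | c t = b}
  have hF : #F.offDiag ≤ #{w ∈ {w ∈ T.offDiag | c w.1 = c w.2} | c w.1 = b} := by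
    refine card_le_card fun w hw => ?_
    obtain ⟨h1, h2, h12⟩ := mem_offDiag.1 hw
    rw [mem_filter] at h1 h2
    simp [h1, h2, h12]
  rw [offDiag_card] at hF
  zify [Nat.le_mul_self #F] at hF ⊢
  nlinarith

theorem sum_card_incidences_le_of_cells (P : Finset γ) (c : γ → κ) (L : Finset ι)
    (C : ι → Set γ) {k m : ℕ}
    (hunique : ∀ p ∈ P, ∀ q ∈ P, p ≠ q → ∀ l ∈ L, ∀ l' ∈ L,
      p ∈ C l → q ∈ C l → p ∈ C l' → q ∈ C l' → l = l')
    (hcells : ∀ l ∈ L, #({p ∈ P | p ∈ C l}.image c) ≤ k)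
    (hcell : ∀ p ∈ P, #{q ∈ P | c q = c p} ≤ m) :
    ∑ l ∈ L, #{p ∈ P | p ∈ C l} ≤ k * #L + #P * m := by
  set Q := {w ∈ P.offDiag | c w.1 = c w.2}
  have hcurve : ∀ l ∈ L, #{p ∈ P | p ∈ C l} ≤ k + #{w ∈ Q | w.1 ∈ C l ∧ w.2 ∈ C l} := by
    intro l hl
    refine (card_le_card_image_add_card_filter_offDiag _ c).trans
      (add_le_add (hcells l hl) (card_le_card fun w hw => ?_))
    simp only [Q, mem_filter, mem_offDiag] at hw ⊢
    tauto
  have hpairs : ∑ l ∈ L, #{w ∈ Q | w.1 ∈ C l ∧ w.2 ∈ C l} ≤ #Q := by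
    refine (sum_card_bipartiteAbove_eq_sum_card_bipartiteBelow
      (fun l (w : γ × γ) => w.1 ∈ C l ∧ w.2 ∈ C l)).trans_le ?_
    refine (sum_le_card_nsmul _ _ 1 fun w hw => card_le_one.2 fun l hl l' hl' => ?_).trans
      (by simp)
    simp only [Q, mem_filter, mem_offDiag] at hw
    simp only [bipartiteBelow, mem_filter] at hl hl'
    exact hunique _ hw.1.1 _ hw.1.2.1 hw.1.2.2 l hl.1 l' hl'.1 hl.2.1 hl.2.2 hl'.2.1 hl'.2.2
  have hQ : #Q ≤ #P * m := by
    rw [mul_comm]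
    refine card_le_mul_card_image_of_maps_to (f := Prod.fst)
      (fun w hw => (mem_offDiag.1 (mem_filter.1 hw).1).1) m fun p hp => ?_
    refine (card_le_card_of_injOn Prod.snd (fun w hw => ?_) ?_).trans (hcell p hp)
    · simp only [mem_coe, mem_filter, mem_offDiag] at hw ⊢
      exact ⟨hw.1.1.2.1, hw.2 ▸ hw.1.2.symm⟩
    · intro w hw w' hw' h
      simp only [mem_coe, mem_filter] at hw hw'
      exact Prod.ext (hw.2.trans hw'.2.symm) h
  calc ∑ l ∈ L, #{p ∈ P | p ∈ C l}
      ≤ ∑ l ∈ L, (k + #{w ∈ Q | w.1 ∈ C l ∧ w.2 ∈ C l}) := sum_le_sum hcurve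
    _ ≤ k * #L + #P * m := by
      rw [sum_add_distrib, sum_const, smul_eq_mul, mul_comm]
      exact add_le_add le_rfl (hpairs.trans hQ)

end CellPartition

section Chains

variable {α β ι : Type*} [LinearOrder α] [LinearOrder β]

theorem sum_card_incidences_le_of_isChain (X : Finset α) (Y : Finset β) (L : Finset ι)
    (C : ι → Set (α × β)) (hchain : ∀ l ∈ L, IsChain (· ≤ ·) (C l))
    (hunique : ∀ p ∈ X ×ˢ Y, ∀ q ∈ X ×ˢ Y, p ≠ q → ∀ l ∈ L, ∀ l' ∈ L,
      p ∈ C l → q ∈ C l → p ∈ C l' → q ∈ C l' → l = l')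
    {r : ℕ} (hr : 0 < r) :
    ∑ l ∈ L, #{p ∈ X ×ˢ Y | p ∈ C l} ≤
      2 * r * #L + #X * #Y * ((#X / r + 1) * (#Y / r + 1)) := by
  set cell := Prod.map (rankBlock X r) (rankBlock Y r)
  rw [← card_product]
  refine sum_card_incidences_le_of_cells (X ×ˢ Y) cell L C hunique (fun l hl => ?_)
    (fun p _ => ?_)
  · rw [two_mul]
    refine card_le_add_of_isChain ?_ fun c hc => ?_
    · rw [coe_image]
      refine ((rankBlock_mono X r).prodMap (rankBlock_mono Y r)).isChain_image
        ((hchain l hl).mono fun p hp => ?_)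
      exact (mem_filter.1 (mem_coe.1 hp)).2
    · obtain ⟨p, hp, rfl⟩ := mem_image.1 hc
      have hp' := mem_product.1 (mem_filter.1 hp).1
      exact ⟨rankBlock_lt X hr hp'.1, rankBlock_lt Y hr hp'.2⟩
  · calc #{q ∈ X ×ˢ Y | cell q = cell p}
        ≤ #({x ∈ X | rankBlock X r x = (cell p).1} ×ˢ {y ∈ Y | rankBlock Y r y = (cell p).2}) :=
          card_le_card fun q hq => by
            simp only [mem_filter, mem_product, cell, Prod.map, Prod.ext_iff] at hq ⊢
            tauto
      _ ≤ (#X / r + 1) * (#Y / r + 1) := by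
          rw [card_product]
          exact Nat.mul_le_mul (card_filter_rankBlock_eq_le X r _)
            (card_filter_rankBlock_eq_le Y r _)

lemma cast_div_add_one_le_two_mul_div {n r : ℕ} (hr : 0 < r) (hrn : r ≤ n) :
    ((n / r + 1 : ℕ) : ℝ) ≤ 2 * n / r := by
  have hr' : (0 : ℝ) < r := by exact_mod_cast hr
  have hone : (1 : ℝ) ≤ n / r := by
    rw [le_div_iff₀ hr', one_mul]
    exact_mod_cast hrn
  push_cast
  linarith [Nat.cast_div_le (α := ℝ) (m := n) (n := r),
    show (2 : ℝ) * n / r = n / r + n / r by ring]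

theorem card_mul_pow_three_le_of_isChain (X : Finset α) (Y : Finset β) (L : Finset ι)
    (C : ι → Set (α × β)) (hchain : ∀ l ∈ L, IsChain (· ≤ ·) (C l))
    (hunique : ∀ p ∈ X ×ˢ Y, ∀ q ∈ X ×ˢ Y, p ≠ q → ∀ l ∈ L, ∀ l' ∈ L,
      p ∈ C l → q ∈ C l → p ∈ C l' → q ∈ C l' → l = l')
    {τ : ℝ} (hτ : 4 ≤ τ) (hτX : τ ≤ #X) (hτY : τ ≤ #Y)
    (hrich : ∀ l ∈ L, τ ≤ #{p ∈ X ×ˢ Y | p ∈ C l}) :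
    #L * τ ^ 3 ≤ 512 * #X ^ 2 * #Y ^ 2 := by
  -- `r ≤ τ / 4` keeps the `2 r |L|` cell term below half of the `τ |L|` incidences.
  set r := ⌊τ / 4⌋₊
  have hr : 1 ≤ r := Nat.le_floor (by push_cast; linarith)
  have hrτ : (r : ℝ) ≤ τ / 4 := Nat.floor_le (by positivity)
  have hτr : τ ≤ 8 * r := by
    have := Nat.lt_floor_add_one (τ / 4)
    have : (1 : ℝ) ≤ r := by exact_mod_cast hr
    linarith
  have hblock : ∀ n : ℕ, τ ≤ n → ((n / r + 1 : ℕ) : ℝ) ≤ 16 * n / τ := fun n hn => by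
    have hrn : (r : ℝ) ≤ n := by linarith
    refine (cast_div_add_one_le_two_mul_div hr (by exact_mod_cast hrn)).trans ?_
    rw [div_le_div_iff₀ (by positivity) (by positivity)]
    nlinarith
  have hincidences : (#L : ℝ) * τ ≤ 2 * r * #L + #X * #Y * ((16 * #X / τ) * (16 * #Y / τ)) := by
    calc (#L : ℝ) * τ ≤ ∑ l ∈ L, (#{p ∈ X ×ˢ Y | p ∈ C l} : ℝ) := by
          rw [← nsmul_eq_mul]
          exact card_nsmul_le_sum _ _ _ hrich
      _ ≤ 2 * r * #L + #X * #Y * ((#X / r + 1 : ℕ) * (#Y / r + 1 : ℕ)) := by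
          exact_mod_cast sum_card_incidences_le_of_isChain X Y L C hchain hunique hr
      _ ≤ 2 * r * #L + #X * #Y * ((16 * #X / τ) * (16 * #Y / τ)) := by
          gcongr
          exacts [hblock _ hτX, hblock _ hτY]
  have hτ0 : 0 < τ := by linarith
  have hhalf : (#L : ℝ) * τ / 2 ≤ 256 * #X ^ 2 * #Y ^ 2 / τ ^ 2 := by
    have : (#X : ℝ) * #Y * ((16 * #X / τ) * (16 * #Y / τ)) = 256 * #X ^ 2 * #Y ^ 2 / τ ^ 2 := by
      field_simp
      ring
    nlinarith
  rw [le_div_iff₀ (by positivity)] at hhalf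
  nlinarith

end Chains

lemma delta_le_card_right (X Y : Finset ℝ) (s : ℝ) : delta X Y s ≤ #Y :=
  card_le_card_of_injOn Prod.snd (fun p hp => (mem_product.1 (mem_filter.1 hp).1).2)
    fun p hp q hq h => by
      have := (mem_filter.1 hp).2.trans (mem_filter.1 hq).2.symm
      exact Prod.ext (by linarith) h

/-- A point of `(a • A) ×ˢ Y` lies on `diffLine a s` exactly when it is `(a * x, y)` with
`x - y = s`, so `delta A Y s` counts incidences with this line. -/
def diffLine (a s : ℝ) : Set (ℝ × ℝ) := {p | p.1 = a * (p.2 + s)}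

lemma mem_diffLine {a s : ℝ} {p : ℝ × ℝ} : p ∈ diffLine a s ↔ p.1 = a * (p.2 + s) := Iff.rfl

lemma isChain_diffLine {a : ℝ} (ha : 0 < a) (s : ℝ) : IsChain (· ≤ ·) (diffLine a s) := by
  intro p hp q hq _
  simp only [Prod.le_def, mem_diffLine.1 hp, mem_diffLine.1 hq]
  rcases le_total p.2 q.2 with h | h
  · exact Or.inl ⟨by gcongr, h⟩
  · exact Or.inr ⟨by gcongr, h⟩

lemma eq_of_mem_diffLine {a a' s s' : ℝ} {p q : ℝ × ℝ} (hpq : p ≠ q) (ha : a ≠ 0)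
    (hp : p ∈ diffLine a s) (hq : q ∈ diffLine a s)
    (hp' : p ∈ diffLine a' s') (hq' : q ∈ diffLine a' s') : a = a' ∧ s = s' := by
  rw [mem_diffLine] at hp hq hp' hq'
  have h2 : p.2 - q.2 ≠ 0 := sub_ne_zero.2 fun h => hpq (Prod.ext (by rw [hp, hq, h]) h)
  have haa : a = a' := mul_right_cancel₀ h2 (by linear_combination hp' - hq' - hp + hq)
  subst haa
  exact ⟨rfl, by linarith [mul_left_cancel₀ ha (hp.symm.trans hp')]⟩

lemma delta_le_card_filter_mem_diffLine {A X Y : Finset ℝ} {a : ℝ} (ha : a ≠ 0)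
    (hAX : a • A ⊆ X) (s : ℝ) : delta A Y s ≤ #{p ∈ X ×ˢ Y | p ∈ diffLine a s} := by
  refine card_le_card_of_injOn (fun p => (a * p.1, p.2)) (fun p hp => ?_) fun p _ q _ h => ?_
  · obtain ⟨hp, hps⟩ := mem_filter.1 hp
    obtain ⟨hx, hy⟩ := mem_product.1 hp
    refine mem_filter.2 ⟨mem_product.2 ⟨hAX (smul_mem_smul_finset hx), hy⟩, ?_⟩
    rw [mem_diffLine, ← hps]
    ring
  · obtain ⟨h1, h2⟩ := Prod.ext_iff.1 h
    exact Prod.ext (mul_left_cancel₀ ha h1) h2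

noncomputable def richDifferences (A Y : Finset ℝ) (τ : ℝ) : Finset ℝ :=
  (A - Y).filter fun s => τ ≤ (delta A Y s : ℝ)

lemma card_richDifferences_le (A Y : Finset ℝ) (τ : ℝ) : #(richDifferences A Y τ) ≤ #A * #Y :=
  (card_filter_le _ _).trans card_sub_le

theorem card_mul_card_richDifferences_mul_pow_three_le {A : Finset ℝ} (hpos : ∀ a ∈ A, 0 < a)
    (Y : Finset ℝ) {τ : ℝ} (hτ : 4 ≤ τ) :
    (#A * #(richDifferences A Y τ) : ℝ) * τ ^ 3 ≤ 512 * #(A * A) ^ 2 * #Y ^ 2 := by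
  set S := richDifferences A Y τ
  rcases S.eq_empty_or_nonempty with hS | ⟨s₀, hs₀⟩
  · simp only [hS, card_empty, CharP.cast_eq_zero, mul_zero, zero_mul]
    positivity
  obtain ⟨hs₀AY, hτs₀⟩ := mem_filter.1 hs₀
  obtain ⟨a₀, ha₀, -⟩ := mem_sub.1 hs₀AY
  have hAX : #A ≤ #(A * A) := card_le_card_mul_right₀ ha₀ (hpos a₀ ha₀).ne'
  have key := card_mul_pow_three_le_of_isChain (A * A) Y (A ×ˢ S)
    (fun l => diffLine l.1 l.2) (fun l hl => isChain_diffLine (hpos _ (mem_product.1 hl).1) _)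
    (fun p _ q _ hpq l hl l' _ hp hq hp' hq' => Prod.ext_iff.2 <|
      eq_of_mem_diffLine hpq (hpos _ (mem_product.1 hl).1).ne' hp hq hp' hq') hτ
    (hτs₀.trans (by exact_mod_cast (delta_le_card_left A Y s₀).trans hAX))
    (hτs₀.trans (by exact_mod_cast delta_le_card_right A Y s₀))
    fun l hl => (mem_filter.1 (mem_product.1 hl).2).2.trans <| by
      exact_mod_cast delta_le_card_filter_mem_diffLine (hpos _ (mem_product.1 hl).1).ne'
        (smul_finset_subset_mul (mem_product.1 hl).1) _
  rwa [card_product, Nat.cast_mul] at key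

theorem small_product_set_is_SzT_type :
    ∃ C : ℝ, 0 < C ∧ ∀ (A : Finset ℝ) (M : ℝ),
      A.Nonempty → (∀ a ∈ A, 0 < a) → 1 ≤ M → ((A * A).card : ℝ) ≤ M * A.card →
      SzTType2 A (C * M ^ 2) := by
  refine ⟨512, by norm_num, fun A M hA hpos hM hAA Y τ hτ => ?_⟩
  change (#(richDifferences A Y τ) : ℝ) ≤ _
  rw [le_div_iff₀ (by positivity)]
  have hM2 : 1 ≤ M ^ 2 := one_le_pow₀ hM
  rcases lt_or_ge τ 4 with hτ4 | hτ4
  · have hS : (#(richDifferences A Y τ) : ℝ) ≤ #A * #Y := by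
      exact_mod_cast card_richDifferences_le A Y τ
    have hY : (#Y : ℝ) ≤ #Y ^ 2 := by exact_mod_cast Nat.le_self_pow two_ne_zero _
    have hτ3 : τ ^ 3 ≤ 4 ^ 3 := pow_le_pow_left₀ (by linarith) hτ4.le 3
    calc (#(richDifferences A Y τ) : ℝ) * τ ^ 3 ≤ (#A * #Y) * 4 ^ 3 := by gcongr
      _ ≤ (#A * #Y ^ 2) * (512 * M ^ 2) := by gcongr; linarith
      _ = 512 * M ^ 2 * #A * #Y ^ 2 := by ring
  have hA : (0 : ℝ) < #A := by exact_mod_cast hA.card_pos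
  refine le_of_mul_le_mul_left ?_ hA
  calc (#A : ℝ) * (#(richDifferences A Y τ) * τ ^ 3)
      ≤ 512 * #(A * A) ^ 2 * #Y ^ 2 := by
        rw [← mul_assoc]
        exact card_mul_card_richDifferences_mul_pow_three_le hpos Y hτ4
    _ ≤ 512 * (M * #A) ^ 2 * #Y ^ 2 := by gcongr
    _ = #A * (512 * M ^ 2 * #A * #Y ^ 2) := by ring
end
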